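/- arXiv:1008.5143 — 2 statements merged into one kernel-verified Lean document; each statement's English description precedes it below -/
import Mathlib

section
/- Let n ∈ ℕ and 1 ≤ k ≤ n. Then there exists p ∈ [k/n, 1] such that (k/(np)) · B_{n,p}({k,…,n}) ≥ (1 + 5 k^{-1/3})^{-1}. -/
open MeasureTheory

/-- Binomial upper tail `B_{n,p}({k,…,n})`. -/
noncomputable def binTail (n k : ℕ) (p : ℝ) : ℝ :=
  ∑ j ∈ Finset.Icc k n, (n.choose j : ℝ) * p ^ j * (1 - p) ^ (n - j)

/-- `ψ_{n,k}(p) = p⁻¹ B_{n,p}({k,…,n})`, extended continuously at `0`. -/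
noncomputable def psi (n k : ℕ) (p : ℝ) : ℝ :=
  if p = 0 then (if k = 1 then (n : ℝ) else 0) else p⁻¹ * binTail n k p

/-- `c_{n,k} = sup_{p ∈ [0,1]} ψ_{n,k}(p)`. -/
noncomputable def cnk (n k : ℕ) : ℝ := sSup (psi n k '' Set.Icc 0 1)

/-- `f_{n,k}(u) = u ⋅ sup_{p ∈ [u,1]} ψ_{n,k}(p)`. -/
noncomputable def fnk (n k : ℕ) (u : ℝ) : ℝ := u * sSup (psi n k '' Set.Icc u 1)

/-!
Put `θ = k^{-1/3}` and `δ = 10θ/3`. If `k(1 + δ) ≤ n`, take `p = k(1 + δ)/n`, so that `k/(np) = (1 + δ)⁻¹`.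
The binomial weights are the Bernstein polynomials evaluated at `p`, whose variance identity gives
Chebyshev's inequality: the mass below `k` is at most `np(1-p)/(np - k + 1)² ≤ k(1 + δ)/(kδ + 1)²`.
Since `k = θ⁻³`, the resulting lower bound is at least `(1 + 5θ)⁻¹` by the polynomial inequality
`(1 + 5θ)(1 + 10θ/3) ≤ 5/3 (10/3 + θ²)²` on `[0, 1]`. Otherwise `p = 1` works, as `k/n > (1 + δ)⁻¹`.
-/

open Finset Polynomial

lemma eval_bernsteinPolynomial (n j : ℕ) (p : ℝ) :
    (bernsteinPolynomial ℝ n j).eval p = n.choose j * p ^ j * (1 - p) ^ (n - j) := by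
  simp [bernsteinPolynomial]

lemma eval_bernsteinPolynomial_nonneg (n j : ℕ) {p : ℝ} (hp0 : 0 ≤ p) (hp1 : p ≤ 1) :
    0 ≤ (bernsteinPolynomial ℝ n j).eval p := by
  rw [eval_bernsteinPolynomial]
  have : 0 ≤ 1 - p := by linarith
  positivity

lemma sum_eval_bernsteinPolynomial (n : ℕ) (p : ℝ) :
    ∑ j ∈ range (n + 1), (bernsteinPolynomial ℝ n j).eval p = 1 := by
  simpa [eval_finsetSum] using congr_arg (eval p) (bernsteinPolynomial.sum ℝ n)

lemma sum_sq_mul_eval_bernsteinPolynomial (n : ℕ) (p : ℝ) :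
    ∑ j ∈ range (n + 1), (n * p - j) ^ 2 * (bernsteinPolynomial ℝ n j).eval p
      = n * p * (1 - p) := by
  simpa [eval_finsetSum] using congr_arg (eval p) (bernsteinPolynomial.variance ℝ n)

lemma binTail_eq_sum_eval (n k : ℕ) (p : ℝ) :
    binTail n k p = ∑ j ∈ Icc k n, (bernsteinPolynomial ℝ n j).eval p := by
  simp only [binTail, eval_bernsteinPolynomial]

lemma binTail_eq_one_sub {n k : ℕ} (hkn : k ≤ n) (p : ℝ) :
    binTail n k p = 1 - ∑ j ∈ range k, (bernsteinPolynomial ℝ n j).eval p := by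
  rw [binTail_eq_sum_eval, ← sum_eval_bernsteinPolynomial n p, ← Nat.Ico_zero_eq_range,
    ← Nat.Ico_zero_eq_range, ← Finset.Ico_add_one_right_eq_Icc,
    ← sum_Ico_consecutive _ (Nat.zero_le k) (by omega : k ≤ n + 1)]
  ring

lemma binTail_one {n k : ℕ} (hkn : k ≤ n) : binTail n k 1 = 1 := by
  rw [binTail_eq_one_sub hkn, sub_eq_self]
  refine sum_eq_zero fun j hj => ?_
  rw [eval_bernsteinPolynomial, sub_self,
    zero_pow (Nat.sub_ne_zero_of_lt ((mem_range.mp hj).trans_le hkn)), mul_zero]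

lemma one_sub_div_sq_le_binTail {n k : ℕ} {p : ℝ} (hp0 : 0 ≤ p) (hp1 : p ≤ 1)
    (hk : (k : ℝ) < n * p + 1) :
    1 - n * p * (1 - p) / (n * p - k + 1) ^ 2 ≤ binTail n k p := by
  set t : ℝ := n * p - k + 1
  have ht : 0 < t := by linarith
  have hkn : k ≤ n := Nat.lt_succ_iff.mp (by exact_mod_cast (by nlinarith : (k : ℝ) < n + 1))
  have hlow : ∑ j ∈ range k, (bernsteinPolynomial ℝ n j).eval p
      ≤ ∑ j ∈ range (n + 1), (n * p - j) ^ 2 / t ^ 2 * (bernsteinPolynomial ℝ n j).eval p := by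
    calc ∑ j ∈ range k, (bernsteinPolynomial ℝ n j).eval p
        ≤ ∑ j ∈ range k, (n * p - j) ^ 2 / t ^ 2 * (bernsteinPolynomial ℝ n j).eval p := by
          refine sum_le_sum fun j hj => le_mul_of_one_le_left
            (eval_bernsteinPolynomial_nonneg n j hp0 hp1) ?_
          have hjk : (j : ℝ) + 1 ≤ k := by exact_mod_cast mem_range.mp hj
          rw [one_le_div (by positivity)]
          exact pow_le_pow_left₀ ht.le (by linarith) 2
      _ ≤ _ := sum_le_sum_of_subset_of_nonneg (range_subset_range.mpr (by omega))
          fun j _ _ => mul_nonneg (by positivity) (eval_bernsteinPolynomial_nonneg n j hp0 hp1)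
  have hvar : ∑ j ∈ range (n + 1), (n * p - j) ^ 2 / t ^ 2 * (bernsteinPolynomial ℝ n j).eval p
      = n * p * (1 - p) / t ^ 2 := by
    simp_rw [div_mul_eq_mul_div, ← sum_div, sum_sq_mul_eval_bernsteinPolynomial]
  rw [binTail_eq_one_sub hkn]
  linarith

lemma one_add_mul_mul_one_add_le (θ : ℝ) (hθ0 : 0 ≤ θ) (hθ1 : θ ≤ 1) :
    (1 + 5 * θ) * (1 + 10 / 3 * θ) ≤ 5 / 3 * (10 / 3 + θ ^ 2) ^ 2 := by
  nlinarith [mul_nonneg hθ0 (sub_nonneg.mpr hθ1), sq_nonneg θ]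

lemma inv_one_add_five_mul_le {k θ : ℝ} (hθ0 : 0 < θ) (hθ1 : θ ≤ 1) (hkθ : k * θ ^ 3 = 1) :
    (1 + 5 * θ)⁻¹
      ≤ (1 + 10 / 3 * θ)⁻¹ * (1 - k * (1 + 10 / 3 * θ) / (k * (10 / 3 * θ) + 1) ^ 2) := by
  obtain rfl : k = (θ ^ 3)⁻¹ := eq_inv_of_mul_eq_one_left hkθ
  have := one_add_mul_mul_one_add_le θ hθ0.le hθ1
  rw [inv_mul_eq_div, le_div_iff₀ (by positivity), inv_mul_le_iff₀ (by positivity)]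
  field_simp
  nlinarith [pow_pos hθ0 3]

lemma inv_one_add_mul_one_sub_le_div_mul_binTail {n k : ℕ} {δ : ℝ} (hk : 0 < k) (hδ : 0 < δ)
    (hkn : k * (1 + δ) ≤ n) :
    (1 + δ)⁻¹ * (1 - k * (1 + δ) / (k * δ + 1) ^ 2)
      ≤ k / (n * (k * (1 + δ) / n)) * binTail n k (k * (1 + δ) / n) := by
  set p : ℝ := k * (1 + δ) / n
  have hk0 : (0 : ℝ) < k := by exact_mod_cast hk
  have hn0 : (0 : ℝ) < n := by nlinarith
  have hnp : n * p = k * (1 + δ) := mul_div_cancel₀ _ hn0.ne'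
  have hp0 : 0 ≤ p := by positivity
  have hcheb := one_sub_div_sq_le_binTail (k := k) hp0 ((div_le_one hn0).mpr hkn)
    (by rw [hnp]; nlinarith)
  rw [hnp, show (k : ℝ) * (1 + δ) - k + 1 = k * δ + 1 by ring] at hcheb
  rw [hnp, div_mul_cancel_left₀ hk0.ne']
  gcongr
  refine le_trans ?_ hcheb
  gcongr 1 - ?_ / _
  exact mul_le_of_le_one_right (by positivity) (sub_le_self _ hp0)

/-- There is `p ∈ [k/n, 1]` with `(k/(np)) ⋅ B_{n,p}({k,…,n}) ≥ (1 + 5 k^{-1/3})⁻¹`. -/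
theorem binTail_lower_bound (n k : ℕ) (hk1 : 1 ≤ k) (hkn : k ≤ n) :
    ∃ p ∈ Set.Icc ((k : ℝ) / n) 1,
      (1 + 5 * (k : ℝ) ^ (-(1/3) : ℝ))⁻¹ ≤ (k : ℝ) / ((n : ℝ) * p) * binTail n k p := by
  have hk0 : (0 : ℝ) < k := by exact_mod_cast hk1
  have hn0 : (0 : ℝ) < n := by exact_mod_cast hk1.trans hkn
  set θ : ℝ := (k : ℝ) ^ (-(1/3) : ℝ)
  have hθ0 : 0 < θ := by positivity
  have hθ1 : θ ≤ 1 := Real.rpow_le_one_of_one_le_of_nonpos (by exact_mod_cast hk1) (by norm_num)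
  have hkθ : (k : ℝ) * θ ^ 3 = 1 := by
    rw [← Real.rpow_natCast, ← Real.rpow_mul hk0.le]
    norm_num [Real.rpow_neg_one, hk0.ne']
  by_cases hc : (k : ℝ) * (1 + 10 / 3 * θ) ≤ n
  · refine ⟨k * (1 + 10 / 3 * θ) / n, ⟨?_, (div_le_one hn0).mpr hc⟩, ?_⟩
    · exact div_le_div_of_nonneg_right (by nlinarith) hn0.le
    · exact (inv_one_add_five_mul_le hθ0 hθ1 hkθ).trans
        (inv_one_add_mul_one_sub_le_div_mul_binTail hk1 (by positivity) hc)
  · refine ⟨1, ⟨(div_le_one hn0).mpr (by exact_mod_cast hkn), le_rfl⟩, ?_⟩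
    rw [binTail_one hkn, mul_one, mul_one, inv_le_comm₀ (by positivity) (by positivity), inv_div,
      div_le_iff₀ hk0]
    nlinarith
end

section
/- Let n ∈ ℕ, 1 ≤ k ≤ n and α ∈ [0,1]. Then the supremum of ∫_{[0,1]} B_{n,t}({k,…,n}) dP(t) over all Borel probability measures P on [0,1] with mean ∫ t dP(t) ≤ α is attained and equals f_{n,k}(α). -/
open MeasureTheory

/-! The tail `B(p) = B_{n,p}({k,…,n})` vanishes at `0` and has derivative
`k (n choose k) p^(k-1) (1-p)^(n-k)`, which increases up to `m = (k-1)/(n-1)` and decreases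
afterwards: `B` is convex on `[0, m]` and concave on `[m, 1]`. Hence `B` has an affine majorant
`a + b t` on `[0, 1]` with `b ≥ 0` and `a + b α ≤ α M`, where `M = max_{[α,1]} ψ`: the tangent at
`α` if `α ≥ m` and this tangent meets the vertical axis above `0`, and otherwise the line `M t`,
since then `B` stays below its chord from the origin to `α`.
Integrating the majorant gives `∫ B dP ≤ α M`, and the law `(1 - α/p) δ₀ + (α/p) δ_p`, for `p` a
maximiser of `ψ` on `[α, 1]`, attains it. -/

open Set

theorem ConcaveOn.le_add_mul_sub_of_hasDerivAt {S : Set ℝ} {f : ℝ → ℝ} {f' x y : ℝ}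
    (hf : ConcaveOn ℝ S f) (hx : x ∈ S) (hy : y ∈ S) (hf' : HasDerivAt f f' x) :
    f y ≤ f x + f' * (y - x) := by
  rcases lt_trichotomy y x with h | rfl | h
  · have := hf.le_slope_of_hasDerivAt hy hx h hf'
    rw [slope_def_field, le_div_iff₀ (sub_pos.2 h)] at this
    linarith
  · simp
  · have := hf.slope_le_of_hasDerivAt hx hy h hf'
    rw [slope_def_field, div_le_iff₀ (sub_pos.2 h)] at this
    linarith

theorem ConvexOn.le_affine_of_mem_Icc {f : ℝ → ℝ} {x y a b z : ℝ} (hf : ConvexOn ℝ (Icc x y) f)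
    (hx : f x ≤ a + b * x) (hy : f y ≤ a + b * y) (hz : z ∈ Icc x y) : f z ≤ a + b * z := by
  have hxy := hz.1.trans hz.2
  have hg := hf.sub ((concaveOn_const a (convex_Icc x y)).add
    ((LinearMap.mul ℝ ℝ b).concaveOn (convex_Icc x y)))
  have := hg.le_max_of_mem_Icc (left_mem_Icc.2 hxy) (right_mem_Icc.2 hxy) hz
  simp only [Pi.sub_apply, Pi.add_apply, LinearMap.mul_apply', le_max_iff] at this
  rcases this with h | h <;> linarith

theorem ContinuousOn.integrable_of_ae_mem {X E : Type*} [TopologicalSpace X] [MeasurableSpace X]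
    [OpensMeasurableSpace X] [T2Space X] [NormedAddCommGroup E] {μ : Measure X}
    [IsFiniteMeasureOnCompacts μ] {K : Set X} {f : X → E} (hK : IsCompact K)
    (hf : ContinuousOn f K) (h : ∀ᵐ x ∂μ, x ∈ K) : Integrable f μ := by
  rw [← Measure.restrict_eq_self_of_ae_mem h]
  exact hf.integrableOn_compact hK

theorem integral_le_of_ae_le_affine {P : Measure ℝ} [IsProbabilityMeasure P] {f : ℝ → ℝ}
    {a b α : ℝ} (hb : 0 ≤ b) (hf : Integrable f P) (hid : Integrable (fun t => t) P)
    (hle : ∀ᵐ t ∂P, f t ≤ a + b * t) (hmean : ∫ t, t ∂P ≤ α) :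
    ∫ t, f t ∂P ≤ a + b * α :=
  calc ∫ t, f t ∂P ≤ ∫ t, a + b * t ∂P :=
        integral_mono_ae hf ((integrable_const a).add (hid.const_mul b)) hle
    _ = a + b * ∫ t, t ∂P := by
        rw [integral_add (integrable_const a) (hid.const_mul b), integral_const, probReal_univ,
          one_smul, integral_const_mul]
    _ ≤ a + b * α := by gcongr

section TwoPoint

variable {X : Type*} [MeasurableSpace X]

noncomputable def twoPoint (s : ℝ) (a b : X) : Measure X :=
  ENNReal.ofReal (1 - s) • Measure.dirac a + ENNReal.ofReal s • Measure.dirac b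

variable {s : ℝ} {a b : X}

theorem twoPoint_apply_of_mem (hs : s ∈ Icc 0 1) {S : Set X} (hS : MeasurableSet S) (ha : a ∈ S)
    (hb : b ∈ S) : twoPoint s a b S = 1 := by
  simp only [twoPoint, Measure.add_apply, Measure.smul_apply, Measure.dirac_apply' _ hS,
    Set.indicator_of_mem ha, Set.indicator_of_mem hb, Pi.one_apply, smul_eq_mul, mul_one]
  rw [← ENNReal.ofReal_add (sub_nonneg.2 hs.2) hs.1, sub_add_cancel, ENNReal.ofReal_one]

theorem isProbabilityMeasure_twoPoint (hs : s ∈ Icc 0 1) : IsProbabilityMeasure (twoPoint s a b) :=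
  ⟨twoPoint_apply_of_mem hs MeasurableSet.univ trivial trivial⟩

theorem integral_twoPoint [MeasurableSingletonClass X] (hs : s ∈ Icc 0 1) (f : X → ℝ) :
    ∫ x, f x ∂twoPoint s a b = (1 - s) * f a + s * f b := by
  rw [twoPoint, integral_add_measure
      ((integrable_dirac enorm_lt_top).smul_measure ENNReal.ofReal_ne_top)
      ((integrable_dirac enorm_lt_top).smul_measure ENNReal.ofReal_ne_top),
    integral_smul_measure, integral_smul_measure, integral_dirac, integral_dirac,
    ENNReal.toReal_ofReal (sub_nonneg.2 hs.2), ENNReal.toReal_ofReal hs.1, smul_eq_mul, smul_eq_mul]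

end TwoPoint

noncomputable def psiPoly (n k : ℕ) (p : ℝ) : ℝ :=
  ∑ j ∈ Finset.Icc k n, (n.choose j : ℝ) * p ^ (j - 1) * (1 - p) ^ (n - j)

noncomputable def binTailDeriv (n k : ℕ) (p : ℝ) : ℝ :=
  k * n.choose k * p ^ (k - 1) * (1 - p) ^ (n - k)

noncomputable def binTailInflection (n k : ℕ) : ℝ := (k - 1) / (n - 1)

variable {n k : ℕ}

theorem binTail_eq_mul_psiPoly (hk : 1 ≤ k) (p : ℝ) : binTail n k p = p * psiPoly n k p := by
  rw [binTail, psiPoly, Finset.mul_sum]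
  refine Finset.sum_congr rfl fun j hj => ?_
  obtain ⟨i, rfl⟩ := Nat.exists_eq_add_of_le' (hk.trans (Finset.mem_Icc.1 hj).1)
  simp only [Nat.add_sub_cancel]
  ring

theorem binTail_zero (hk : 1 ≤ k) : binTail n k 0 = 0 := by
  rw [binTail_eq_mul_psiPoly hk, zero_mul]

theorem psiPoly_nonneg {p : ℝ} (hp : p ∈ Icc 0 1) : 0 ≤ psiPoly n k p := by
  have := sub_nonneg.2 hp.2
  have := hp.1
  exact Finset.sum_nonneg fun _ _ => by positivity

theorem continuous_psiPoly (n k : ℕ) : Continuous (psiPoly n k) := by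
  unfold psiPoly; fun_prop

theorem continuous_binTail (n k : ℕ) : Continuous (binTail n k) := by
  unfold binTail; fun_prop

theorem psi_eq_psiPoly (hk : 1 ≤ k) (hkn : k ≤ n) : psi n k = psiPoly n k := by
  ext p
  rw [psi]
  split_ifs with hp hk_one
  · subst hp hk_one
    rw [psiPoly, Finset.sum_eq_single_of_mem 1 (Finset.mem_Icc.2 ⟨le_rfl, hkn⟩)]
    · simp
    · intro j hj hj1
      have : j - 1 ≠ 0 := by have := (Finset.mem_Icc.1 hj).1; omega
      simp [zero_pow this]
  · subst hp
    refine (Finset.sum_eq_zero fun j hj => ?_).symm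
    have : j - 1 ≠ 0 := by have := (Finset.mem_Icc.1 hj).1; omega
    simp [zero_pow this]
  · rw [binTail_eq_mul_psiPoly hk, inv_mul_cancel_left₀ hp]

theorem hasDerivAt_binTail (hkn : k ≤ n) (p : ℝ) :
    HasDerivAt (binTail n k) (binTailDeriv n k p) p := by
  set T : ℕ → ℝ := fun j => j * n.choose j * p ^ (j - 1) * (1 - p) ^ (n - j)
  have hterm : ∀ j, HasDerivAt (fun q : ℝ => (n.choose j : ℝ) * q ^ j * (1 - q) ^ (n - j))
      (T j - T (j + 1)) p := by
    intro j
    refine (((hasDerivAt_pow j p).const_mul (n.choose j : ℝ)).mul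
      (((hasDerivAt_id p).const_sub 1).pow (n - j))).congr_deriv ?_
    have hchoose : ((j + 1 : ℕ) : ℝ) * n.choose (j + 1) = ((n - j : ℕ) : ℝ) * n.choose j := by
      rw [← Nat.cast_mul, ← Nat.cast_mul, mul_comm, Nat.choose_succ_right_eq, mul_comm]
    simp only [T, Nat.add_sub_cancel, Nat.sub_add_eq, hchoose, id, Pi.pow_apply]
    ring
  have htel : ∑ j ∈ Finset.Icc k n, (T j - T (j + 1)) = binTailDeriv n k p :=
    calc ∑ j ∈ Finset.Icc k n, (T j - T (j + 1))
        = -∑ j ∈ Finset.Icc k n, (T (j + 1) - T j) := by simp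
      _ = T k - T (n + 1) := by rw [Finset.sum_Icc_sub hkn, neg_sub]
      _ = binTailDeriv n k p := by simp [T, binTailDeriv, Nat.choose_succ_self]
  rw [← htel]
  exact HasDerivAt.fun_sum fun j _ => hterm j

theorem mul_deriv_binTailDeriv (hk : 1 ≤ k) (hkn : k ≤ n) (x : ℝ) :
    x * (1 - x) * deriv (binTailDeriv n k) x =
      binTailDeriv n k x * ((k - 1) - (n - 1) * x) := by
  obtain ⟨a, rfl⟩ := Nat.exists_eq_add_of_le' hk
  obtain ⟨b, rfl⟩ := Nat.exists_eq_add_of_le hkn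
  set c : ℝ := (a + 1 : ℕ) * (a + 1 + b).choose (a + 1)
  have hd : HasDerivAt (binTailDeriv (a + 1 + b) (a + 1))
      (c * (a * x ^ (a - 1)) * (1 - x) ^ b + c * x ^ a * (b * (1 - x) ^ (b - 1) * -1)) x := by
    unfold binTailDeriv
    simp only [Nat.add_sub_cancel, Nat.add_sub_cancel_left]
    exact ((hasDerivAt_pow a x).const_mul c).mul (((hasDerivAt_id x).const_sub 1).pow b)
  rw [hd.deriv, binTailDeriv, Nat.add_sub_cancel, Nat.add_sub_cancel_left]
  rcases a with _ | a <;> rcases b with _ | b <;> simp [c] <;> ring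

theorem binTailDeriv_nonneg {p : ℝ} (hp : p ∈ Icc 0 1) : 0 ≤ binTailDeriv n k p := by
  have := sub_nonneg.2 hp.2
  have := hp.1
  unfold binTailDeriv
  positivity

theorem differentiable_binTailDeriv : Differentiable ℝ (binTailDeriv n k) := by
  unfold binTailDeriv; fun_prop

theorem sub_one_mul_binTailInflection (hk : 1 ≤ k) (hkn : k ≤ n) :
    ((n : ℝ) - 1) * binTailInflection n k = k - 1 := by
  rcases eq_or_ne (n : ℝ) 1 with hn | hn
  · have : (k : ℝ) = 1 := le_antisymm (hn ▸ Nat.cast_le.2 hkn) (Nat.one_le_cast.2 hk)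
    simp [hn, this]
  · exact mul_div_cancel₀ _ (sub_ne_zero.2 hn)

theorem binTailInflection_mem (hk : 1 ≤ k) (hkn : k ≤ n) : binTailInflection n k ∈ Icc 0 1 := by
  have hk' : (1 : ℝ) ≤ k := Nat.one_le_cast.2 hk
  have hkn' : (k : ℝ) ≤ n := Nat.cast_le.2 hkn
  exact ⟨div_nonneg (by linarith) (by linarith), div_le_one_of_le₀ (by linarith) (by linarith)⟩

theorem convexOn_binTail (hk : 1 ≤ k) (hkn : k ≤ n) :
    ConvexOn ℝ (Icc 0 (binTailInflection n k)) (binTail n k) := by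
  refine convexOn_of_hasDerivWithinAt2_nonneg (convex_Icc _ _)
    (continuous_binTail n k).continuousOn
    (fun x _ => (hasDerivAt_binTail hkn x).hasDerivWithinAt)
    (fun x _ => (differentiable_binTailDeriv x).hasDerivAt.hasDerivWithinAt) fun x hx => ?_
  rw [interior_Icc] at hx
  have hm := binTailInflection_mem hk hkn
  have hx1 : x < 1 := hx.2.trans_le hm.2
  have hsign : ((n : ℝ) - 1) * x ≤ k - 1 := by
    rw [← sub_one_mul_binTailInflection hk hkn]
    have : (1 : ℝ) ≤ n := Nat.one_le_cast.2 (hk.trans hkn)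
    exact mul_le_mul_of_nonneg_left hx.2.le (by linarith)
  have hprod : 0 ≤ x * (1 - x) * deriv (binTailDeriv n k) x := by
    rw [mul_deriv_binTailDeriv hk hkn]
    exact mul_nonneg (binTailDeriv_nonneg ⟨hx.1.le, hx1.le⟩) (by linarith)
  exact nonneg_of_mul_nonneg_right hprod (mul_pos hx.1 (sub_pos.2 hx1))

theorem concaveOn_binTail (hk : 1 ≤ k) (hkn : k ≤ n) :
    ConcaveOn ℝ (Icc (binTailInflection n k) 1) (binTail n k) := by
  refine concaveOn_of_hasDerivWithinAt2_nonpos (convex_Icc _ _)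
    (continuous_binTail n k).continuousOn
    (fun x _ => (hasDerivAt_binTail hkn x).hasDerivWithinAt)
    (fun x _ => (differentiable_binTailDeriv x).hasDerivAt.hasDerivWithinAt) fun x hx => ?_
  rw [interior_Icc] at hx
  have hx0 : 0 < x := (binTailInflection_mem hk hkn).1.trans_lt hx.1
  have hsign : (k : ℝ) - 1 ≤ ((n : ℝ) - 1) * x := by
    rw [← sub_one_mul_binTailInflection hk hkn]
    have : (1 : ℝ) ≤ n := Nat.one_le_cast.2 (hk.trans hkn)
    exact mul_le_mul_of_nonneg_left hx.1.le (by linarith)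
  have hprod : x * (1 - x) * deriv (binTailDeriv n k) x ≤ 0 := by
    rw [mul_deriv_binTailDeriv hk hkn]
    exact mul_nonpos_of_nonneg_of_nonpos (binTailDeriv_nonneg ⟨hx0.le, hx.2.le⟩) (by linarith)
  exact nonpos_of_mul_nonpos_right hprod (mul_pos hx0 (sub_pos.2 hx.2))

theorem binTail_le_tangent (hk : 1 ≤ k) (hkn : k ≤ n) {α t : ℝ}
    (hα : α ∈ Icc (binTailInflection n k) 1) (hintercept : α * binTailDeriv n k α ≤ binTail n k α)
    (ht : t ∈ Icc 0 1) : binTail n k t ≤ binTail n k α + binTailDeriv n k α * (t - α) := by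
  have hm := binTailInflection_mem hk hkn
  have htangent : ∀ s ∈ Icc (binTailInflection n k) 1,
      binTail n k s ≤ binTail n k α + binTailDeriv n k α * (s - α) := fun s hs =>
    (concaveOn_binTail hk hkn).le_add_mul_sub_of_hasDerivAt hα hs (hasDerivAt_binTail hkn α)
  rcases le_total (binTailInflection n k) t with hmt | htm
  · exact htangent t ⟨hmt, ht.2⟩
  · have := (convexOn_binTail hk hkn).le_affine_of_mem_Icc
      (a := binTail n k α - binTailDeriv n k α * α) (b := binTailDeriv n k α)
      (by rw [binTail_zero hk]; linarith) (by linarith [htangent _ ⟨le_rfl, hm.2⟩]) ⟨ht.1, htm⟩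
    linarith

theorem binTail_le_psiPoly_mul_of_le_inflection (hk : 1 ≤ k) (hkn : k ≤ n) {α t : ℝ}
    (hα : α ≤ binTailInflection n k) (ht : t ∈ Icc 0 α) : binTail n k t ≤ psiPoly n k α * t := by
  have hconv := (convexOn_binTail hk hkn).subset (Icc_subset_Icc_right hα) (convex_Icc 0 α)
  simpa using hconv.le_affine_of_mem_Icc (a := 0) (b := psiPoly n k α)
    (by simp [binTail_zero hk]) (by rw [binTail_eq_mul_psiPoly hk]; linarith) ht

theorem binTail_le_psiPoly_mul_of_lt_deriv (hk : 1 ≤ k) (hkn : k ≤ n) {α t : ℝ}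
    (hα : α ∈ Icc (binTailInflection n k) 1) (hsteep : binTail n k α < α * binTailDeriv n k α)
    (ht : t ∈ Icc 0 α) : binTail n k t ≤ psiPoly n k α * t := by
  have hm := binTailInflection_mem hk hkn
  rw [binTail_eq_mul_psiPoly hk] at hsteep
  have hQ : psiPoly n k α ≤ binTailDeriv n k α :=
    (lt_of_mul_lt_mul_left hsteep (hm.1.trans hα.1)).le
  have hupper : ∀ s ∈ Icc (binTailInflection n k) α, binTail n k s ≤ psiPoly n k α * s := by
    intro s hs
    have := (concaveOn_binTail hk hkn).le_add_mul_sub_of_hasDerivAt hα ⟨hs.1, hs.2.trans hα.2⟩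
      (hasDerivAt_binTail hkn α)
    rw [binTail_eq_mul_psiPoly hk α] at this
    nlinarith [mul_le_mul_of_nonpos_right hQ (sub_nonpos.2 hs.2)]
  rcases le_total (binTailInflection n k) t with hmt | htm
  · exact hupper t ⟨hmt, ht.2⟩
  · simpa using (convexOn_binTail hk hkn).le_affine_of_mem_Icc (a := 0) (b := psiPoly n k α)
      (by simp [binTail_zero hk]) (by simpa using hupper _ ⟨le_rfl, hα.1⟩) ⟨ht.1, htm⟩

theorem exists_affine_majorant_binTail (hk : 1 ≤ k) (hkn : k ≤ n) {α M : ℝ} (hα : α ∈ Icc 0 1)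
    (hM : ∀ x ∈ Icc α 1, psiPoly n k x ≤ M) :
    ∃ a b : ℝ, 0 ≤ b ∧ (∀ t ∈ Icc 0 1, binTail n k t ≤ a + b * t) ∧ a + b * α ≤ α * M := by
  have hQM : psiPoly n k α ≤ M := hM α ⟨le_rfl, hα.2⟩
  by_cases htangent : binTailInflection n k ≤ α ∧ α * binTailDeriv n k α ≤ binTail n k α
  · refine ⟨binTail n k α - binTailDeriv n k α * α, binTailDeriv n k α,
      binTailDeriv_nonneg hα, fun t ht => ?_, ?_⟩
    · linarith [binTail_le_tangent hk hkn ⟨htangent.1, hα.2⟩ htangent.2 ht]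
    · rw [binTail_eq_mul_psiPoly hk]
      nlinarith [hα.1]
  · refine ⟨0, M, (psiPoly_nonneg hα).trans hQM, fun t ht => ?_, by rw [zero_add, mul_comm]⟩
    rcases le_total α t with hαt | htα
    · rw [binTail_eq_mul_psiPoly hk, zero_add, mul_comm]
      exact mul_le_mul_of_nonneg_right (hM t ⟨hαt, ht.2⟩) ht.1
    have hchord : binTail n k t ≤ psiPoly n k α * t := by
      rcases le_total α (binTailInflection n k) with hαm | hmα
      · exact binTail_le_psiPoly_mul_of_le_inflection hk hkn hαm ⟨ht.1, htα⟩
      · exact binTail_le_psiPoly_mul_of_lt_deriv hk hkn ⟨hmα, hα.2⟩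
          (not_le.1 fun h => htangent ⟨hmα, h⟩) ⟨ht.1, htα⟩
    nlinarith [ht.1]

theorem fnk_eq_mul_psiPoly (hk : 1 ≤ k) (hkn : k ≤ n) {α p : ℝ} (hp : p ∈ Icc α 1)
    (hmax : ∀ x ∈ Icc α 1, psiPoly n k x ≤ psiPoly n k p) : fnk n k α = α * psiPoly n k p := by
  have : IsGreatest (psiPoly n k '' Icc α 1) (psiPoly n k p) :=
    ⟨mem_image_of_mem _ hp, forall_mem_image.2 hmax⟩
  rw [fnk, psi_eq_psiPoly hk hkn, this.csSup_eq]

theorem exists_measure_integral_binTail_eq (hk : 1 ≤ k) {α p : ℝ} (hα : 0 ≤ α)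
    (hp : p ∈ Icc α 1) :
    ∃ P : Measure ℝ, IsProbabilityMeasure P ∧ P (Icc 0 1) = 1 ∧ ∫ t, t ∂P = α ∧
      ∫ t, binTail n k t ∂P = α * psiPoly n k p := by
  have hp0 : 0 ≤ p := hα.trans hp.1
  have hs : α / p ∈ Icc 0 1 := ⟨div_nonneg hα hp0, div_le_one_of_le₀ hp.1 hp0⟩
  -- junk value `α / 0 = 0` makes this hold also for `p = 0`
  have hsp : α / p * p = α := div_mul_cancel_of_imp fun h => le_antisymm (h ▸ hp.1) hα
  refine ⟨twoPoint (α / p) 0 p, isProbabilityMeasure_twoPoint hs,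
    twoPoint_apply_of_mem hs measurableSet_Icc ⟨le_rfl, zero_le_one⟩ ⟨hp0, hp.2⟩, ?_, ?_⟩
  · rw [integral_twoPoint hs, mul_zero, zero_add, hsp]
  · rw [integral_twoPoint hs, binTail_zero hk, binTail_eq_mul_psiPoly hk, mul_zero, zero_add,
      ← mul_assoc, hsp]

/-- The supremum of `∫ B_{n,t}({k,…,n}) dP(t)` over probability measures `P` on `[0,1]`
with mean at most `α` is attained and equals `f_{n,k}(α)`. -/
theorem sup_binTail_integral_eq_fnk (n k : ℕ) (hk1 : 1 ≤ k) (hkn : k ≤ n)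
    (α : ℝ) (hα : α ∈ Set.Icc (0:ℝ) 1) :
    IsGreatest {r : ℝ | ∃ P : Measure ℝ, IsProbabilityMeasure P ∧ P (Set.Icc 0 1) = 1 ∧
        (∫ t, t ∂P) ≤ α ∧ r = ∫ t, binTail n k t ∂P}
      (fnk n k α) := by
  obtain ⟨p, hp, hmax⟩ := isCompact_Icc.exists_isMaxOn (nonempty_Icc.2 hα.2)
    (continuous_psiPoly n k).continuousOn
  rw [fnk_eq_mul_psiPoly hk1 hkn hp hmax]
  refine ⟨?_, ?_⟩
  · obtain ⟨P, hP, hP1, hmean, hint⟩ := exists_measure_integral_binTail_eq hk1 hα.1 hp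
    exact ⟨P, hP, hP1, hmean.le, hint.symm⟩
  · rintro _ ⟨P, hP, hP1, hmean, rfl⟩
    obtain ⟨a, b, hb, hle, hab⟩ := exists_affine_majorant_binTail hk1 hkn hα hmax
    have hae : ∀ᵐ t ∂P, t ∈ Icc (0 : ℝ) 1 :=
      (ae_iff_measure_eq measurableSet_Icc.nullMeasurableSet).2 (by rw [measure_univ]; exact hP1)
    have hint := (continuous_binTail n k).continuousOn.integrable_of_ae_mem isCompact_Icc hae
    have hid := continuousOn_id.integrable_of_ae_mem isCompact_Icc hae
    exact (integral_le_of_ae_le_affine hb hint hid (hae.mono hle) hmean).trans hab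
end
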